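/- Let C = (1, c₂, 2c₂−1, c₄, c₂+c₄−1, 2c₄−1) with c₄ ≥ 3c₂ − 1, and let ℓ = ⌈(c₂+c₄−1)/(2c₂−1)⌉. Assume grd_C(ℓ·(2c₂−1)) = ℓ(2c₂−1) − (c₂+c₄−1) + 1 − ⌊(ℓ(2c₂−1) − (c₂+c₄−1))/c₂⌋·(c₂−1) and grd_C(ℓ·(2c₂−1)) ≤ ℓ. Then C is canonical and the subsystem (1, c₂, 2c₂−1, c₄, c₂+c₄−1) is noncanonical. -/

import Mathlib

open Finset

/-- `x` is a representation of value `v` in the coin system `c 1, …, c n`. -/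
def IsRepr (n : ℕ) (c : ℕ → ℕ) (v : ℕ) (x : ℕ → ℕ) : Prop :=
  ∑ i ∈ Finset.Icc 1 n, c i * x i = v

/-- Minimum number of coins over all representations of `v`. -/
noncomputable def opt (n : ℕ) (c : ℕ → ℕ) (v : ℕ) : ℕ :=
  sInf {k | ∃ x : ℕ → ℕ, IsRepr n c v x ∧ ∑ i ∈ Finset.Icc 1 n, x i = k}

/-- Number of coins used by the greedy algorithm to pay `v`. -/
def grd (n : ℕ) (c : ℕ → ℕ) (v : ℕ) : ℕ :=
  if hv : v = 0 then 0
  else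
    let m := ((Finset.Icc 1 n).filter (fun i => c i ≤ v)).sup c
    if hm : 0 < m then grd n c (v - m) + 1 else 0
termination_by v
decreasing_by omega

/-- The system is canonical: greedy is optimal for every positive value. -/
def Canonical (n : ℕ) (c : ℕ → ℕ) : Prop :=
  ∀ v, 0 < v → opt n c v = grd n c v

/-- `w` is a counterexample to the system. -/
def IsCex (n : ℕ) (c : ℕ → ℕ) (w : ℕ) : Prop :=
  0 < w ∧ opt n c w < grd n c w

/-- `w` is the minimum counterexample to the system. -/
def MinCex (n : ℕ) (c : ℕ → ℕ) (w : ℕ) : Prop :=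
  IsCex n c w ∧ ∀ u, IsCex n c u → w ≤ u

/-- A (currency) system: first coin is `1` and coins strictly increase. -/
def IsSystem (n : ℕ) (c : ℕ → ℕ) : Prop :=
  c 1 = 1 ∧ StrictMonoOn c (Set.Icc 1 n)

/-!
Canonicity is checked through the one-coin criterion: if adding a single coin to any amount
raises the greedy count by at most one, then, by induction on the number of coins, greedy uses
no more coins than any representation.

For `C = (1, a, 2a - 1, b, a + b - 1, 2b - 1)` greedy is explicit. It first removes copies of
`2b - 1`, which lets every one-coin inequality be checked on the window `[0, 2b - 1)`; there it
spends at most one coin `b` or `a + b - 1` and pays the rest in the subsystem `(1, a, 2a - 1)`,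
whose greedy count `grd3` has a closed form. The one-coin inequalities thereby become
inequalities for `grd3`, and beyond elementary properties of `grd3` they need only the bound
`y + a ≤ grd3 a y + b` for `y < b`. That bound is what the hypothesis on the greedy count of
`ℓ (2a - 1)` provides, `ℓ` being the least number of coins `2a - 1` worth at least `a + b - 1`.

Without the coin `2b - 1`, greedy pays `2b` as `(a + b - 1) + (2a - 1) + …` with at least three
coins, while `b + b` needs two.
-/

theorem sum_mul_add_single {s : Finset ℕ} {i : ℕ} (hi : i ∈ s) (w x : ℕ → ℕ) :
    ∑ j ∈ s, w j * (x j + (Pi.single i 1 : ℕ → ℕ) j) = ∑ j ∈ s, w j * x j + w i := by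
  simp [mul_add, Finset.sum_add_distrib, Pi.single_apply, hi]

theorem sum_add_single {s : Finset ℕ} {i : ℕ} (hi : i ∈ s) (x : ℕ → ℕ) :
    ∑ j ∈ s, (x j + (Pi.single i 1 : ℕ → ℕ) j) = ∑ j ∈ s, x j + 1 := by
  simp [Finset.sum_add_distrib, hi]

section Greedy

variable {n : ℕ} {c : ℕ → ℕ}

theorem grd_zero : grd n c 0 = 0 := by
  rw [grd, dif_pos rfl]

theorem grd_eq_of_sup_eq {v k : ℕ} (hv : v ≠ 0)
    (hk : ((Icc 1 n).filter (fun i => c i ≤ v)).sup c = c k) (hck : 0 < c k) :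
    grd n c v = grd n c (v - c k) + 1 := by
  rw [grd, dif_neg hv]
  simp only [hk, dif_pos hck]

theorem exists_grd_eq_grd_sub_add_one (hn : 1 ≤ n) (hc1 : c 1 = 1) {v : ℕ} (hv : 0 < v) :
    ∃ k ∈ Icc 1 n, 0 < c k ∧ c k ≤ v ∧ grd n c v = grd n c (v - c k) + 1 := by
  have h1 : 1 ∈ (Icc 1 n).filter (fun i => c i ≤ v) := by
    simp only [mem_filter, mem_Icc]; omega
  obtain ⟨k, hk, hsup⟩ := exists_mem_eq_sup _ ⟨1, h1⟩ c
  have hck : 0 < c k := by have := le_sup (f := c) h1; omega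
  rw [mem_filter] at hk
  exact ⟨k, hk.1, hck, hk.2, grd_eq_of_sup_eq hv.ne' hsup hck⟩

theorem grd_eq_grd_sub_add_one_of_strictMonoOn (hc : StrictMonoOn c (Set.Icc 1 n)) {k v : ℕ}
    (hk : k ∈ Set.Icc 1 n) (hck : 0 < c k) (hkv : c k ≤ v) (hvk : k < n → v < c (k + 1)) :
    grd n c v = grd n c (v - c k) + 1 := by
  refine grd_eq_of_sup_eq (by omega) (le_antisymm (Finset.sup_le fun i hi => ?_) ?_) hck
  · simp only [mem_filter, mem_Icc] at hi
    by_contra! hik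
    have hki : k + 1 ≤ i := by
      by_contra! h
      exact hik.not_ge (hc.monotoneOn ⟨hi.1.1, hi.1.2⟩ hk (by omega))
    have := hc.monotoneOn ⟨by omega, by omega⟩ ⟨hi.1.1, hi.1.2⟩ hki
    have := hvk (by omega)
    omega
  · exact le_sup (f := c) (by simp only [mem_filter, mem_Icc]; exact ⟨hk, hkv⟩)

theorem exists_isRepr_sum_eq_grd (hn : 1 ≤ n) (hc1 : c 1 = 1) (v : ℕ) :
    ∃ x, IsRepr n c v x ∧ ∑ i ∈ Icc 1 n, x i = grd n c v := by
  induction v using Nat.strong_induction_on with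
  | _ v ih =>
    rcases Nat.eq_zero_or_pos v with rfl | hv
    · exact ⟨0, by simp [IsRepr], by simp [grd_zero]⟩
    obtain ⟨k, hk, hck, hkv, hgrd⟩ := exists_grd_eq_grd_sub_add_one hn hc1 hv
    obtain ⟨x, hx, hsum⟩ := ih (v - c k) (by omega)
    refine ⟨x + Pi.single k 1, ?_, ?_⟩
    · simp only [IsRepr, Pi.add_apply, sum_mul_add_single hk] at hx ⊢
      omega
    · simp only [Pi.add_apply, sum_add_single hk]
      omega

theorem grd_le_of_isRepr (hadd : ∀ i ∈ Icc 1 n, ∀ t, grd n c (c i + t) ≤ grd n c t + 1)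
    {v : ℕ} {x : ℕ → ℕ} (hx : IsRepr n c v x) : grd n c v ≤ ∑ i ∈ Icc 1 n, x i := by
  rw [IsRepr] at hx
  subst hx
  induction hk : ∑ i ∈ Icc 1 n, x i generalizing x with
  | zero =>
    rw [Finset.sum_eq_zero_iff] at hk
    rw [Finset.sum_eq_zero fun i hi => by rw [hk i hi, mul_zero], grd_zero]
  | succ k ih =>
    obtain ⟨i, hi, hxi⟩ := exists_ne_zero_of_sum_ne_zero (s := Icc 1 n) (f := x) (by omega)
    set x' := x - Pi.single i 1
    have hx : x = x' + Pi.single i 1 := by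
      funext j
      by_cases hj : j = i
      · subst hj
        simp only [Pi.add_apply, Pi.sub_apply, Pi.single_eq_same, x']
        omega
      · simp [x', hj]
    rw [hx] at hk ⊢
    simp only [Pi.add_apply, sum_add_single hi, sum_mul_add_single hi] at hk ⊢
    have := ih (x := x') (by omega)
    have := hadd i hi (∑ j ∈ Icc 1 n, c j * x' j)
    rw [add_comm] at this
    omega

theorem canonical_of_grd_add_le (hn : 1 ≤ n) (hc1 : c 1 = 1)
    (hadd : ∀ i ∈ Icc 1 n, ∀ t, grd n c (c i + t) ≤ grd n c t + 1) : Canonical n c := by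
  intro v _
  obtain ⟨x, hx, hsum⟩ := exists_isRepr_sum_eq_grd hn hc1 v
  refine le_antisymm (Nat.sInf_le ⟨x, hx, hsum⟩) ?_
  obtain ⟨y, hy, hsum'⟩ :=
    Nat.sInf_mem (s := {k | ∃ x, IsRepr n c v x ∧ ∑ i ∈ Icc 1 n, x i = k}) ⟨_, x, hx, hsum⟩
  rw [opt, ← hsum']
  exact grd_le_of_isRepr hadd hy

theorem not_canonical_of_isRepr {v : ℕ} {x : ℕ → ℕ} (hv : 0 < v) (hx : IsRepr n c v x)
    (hlt : ∑ i ∈ Icc 1 n, x i < grd n c v) : ¬ Canonical n c := fun h =>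
  (h v hv ▸ hlt).not_ge (Nat.sInf_le ⟨x, hx, rfl⟩)

end Greedy

theorem apply_add_le_of_periodic {g : ℕ → ℕ} {p m : ℕ} (hg : ∀ t, g (p + t) = g t + 1)
    (hin : ∀ t, m + t < p → g (m + t) ≤ g t + 1)
    (hwrap : ∀ t < p, p ≤ m + t → g (m + t - p) ≤ g t) (t : ℕ) : g (m + t) ≤ g t + 1 := by
  have hp : 0 < p := Nat.pos_of_ne_zero fun h => by simpa [h] using hg 0
  induction t using Nat.strong_induction_on with
  | _ t ih =>
  rcases lt_or_ge t p with ht | ht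
  · rcases lt_or_ge (m + t) p with h | h
    · exact hin t h
    · rw [← Nat.add_sub_cancel' h, hg]
      exact Nat.add_le_add_right (hwrap t ht h) 1
  · obtain ⟨s, rfl⟩ := Nat.exists_eq_add_of_le ht
    rw [show m + (p + s) = p + (m + s) by omega, hg, hg]
    exact Nat.add_le_add_right (ih s (by omega)) 1

theorem exists_eq_mul_add_of_pos {d : ℕ} (hd : 0 < d) (y : ℕ) : ∃ q r, r < d ∧ y = d * q + r :=
  ⟨y / d, y % d, Nat.mod_lt y hd, (Nat.div_add_mod y d).symm⟩

-- greedy coin count in the system `(1, a, 2a - 1)`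
def grd3 (a y : ℕ) : ℕ :=
  y / (2 * a - 1) + if y % (2 * a - 1) < a then y % (2 * a - 1) else y % (2 * a - 1) - (a - 1)

section Grd3

variable {a b : ℕ}

theorem grd3_mul_add (q : ℕ) {r : ℕ} (hr : r < 2 * a - 1) :
    grd3 a ((2 * a - 1) * q + r) = q + if r < a then r else r - (a - 1) := by
  rw [grd3, Nat.mul_add_div (by omega), Nat.mul_add_mod, Nat.div_eq_of_lt hr,
    Nat.mod_eq_of_lt hr, add_zero]

theorem grd3_of_lt {y : ℕ} (hy : y < a) : grd3 a y = y := by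
  simpa [hy] using grd3_mul_add (a := a) 0 (r := y) (by omega)

theorem grd3_of_le_of_lt {y : ℕ} (h₁ : a ≤ y) (h₂ : y < 2 * a - 1) :
    grd3 a y = y - (a - 1) := by
  simpa [h₁.not_gt] using grd3_mul_add (a := a) 0 h₂

theorem grd3_add_two_mul_sub_one (ha : 1 ≤ a) (y : ℕ) :
    grd3 a (y + (2 * a - 1)) = grd3 a y + 1 := by
  rw [grd3, grd3, Nat.add_div_right _ (by omega), Nat.add_mod_right]
  omega

theorem grd3_add_le (ha : 1 ≤ a) (y z : ℕ) : grd3 a (y + z) ≤ grd3 a y + grd3 a z := by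
  obtain ⟨q₁, r₁, hr₁, rfl⟩ := exists_eq_mul_add_of_pos (d := 2 * a - 1) (by omega) y
  obtain ⟨q₂, r₂, hr₂, rfl⟩ := exists_eq_mul_add_of_pos (d := 2 * a - 1) (by omega) z
  rw [grd3_mul_add _ hr₁, grd3_mul_add _ hr₂]
  rcases lt_or_ge (r₁ + r₂) (2 * a - 1) with h | h
  · rw [show (2 * a - 1) * q₁ + r₁ + ((2 * a - 1) * q₂ + r₂)
        = (2 * a - 1) * (q₁ + q₂) + (r₁ + r₂) by ring, grd3_mul_add _ h]
    split_ifs <;> omega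
  · rw [show (2 * a - 1) * q₁ + r₁ + ((2 * a - 1) * q₂ + r₂)
        = (2 * a - 1) * (q₁ + q₂ + 1) + (r₁ + r₂ - (2 * a - 1)) by
          rw [Nat.mul_succ, mul_add]; omega, grd3_mul_add _ (by omega)]
    split_ifs <;> omega

theorem grd3_sub_le (ha : 1 ≤ a) (t : ℕ) : grd3 a (t - (a - 1)) ≤ grd3 a t := by
  obtain ⟨q, r, hr, rfl⟩ := exists_eq_mul_add_of_pos (d := 2 * a - 1) (by omega) t
  rw [grd3_mul_add _ hr]
  rcases le_or_gt (a - 1) r with h | h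
  · rw [show (2 * a - 1) * q + r - (a - 1) = (2 * a - 1) * q + (r - (a - 1)) by omega,
      grd3_mul_add _ (by omega)]
    split_ifs <;> omega
  · rcases q with _ | q
    · rw [show (2 * a - 1) * 0 + r - (a - 1) = 0 by omega, grd3_of_lt (by omega)]
      omega
    · rw [show (2 * a - 1) * (q + 1) + r - (a - 1) = (2 * a - 1) * q + (r + a) by
          rw [mul_add]; omega, grd3_mul_add _ (by omega)]
      split_ifs <;> omega

theorem grd3_add_one_le (ha : 2 ≤ a) (y : ℕ) : grd3 a (y + 1) ≤ grd3 a y + 1 :=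
  (grd3_add_le (by omega) y 1).trans_eq (by rw [grd3_of_lt (y := 1) (by omega)])

theorem grd3_add_self_le (ha : 2 ≤ a) (y : ℕ) : grd3 a (y + a) ≤ grd3 a y + 1 :=
  (grd3_add_le (by omega) y a).trans_eq (by rw [grd3_of_le_of_lt le_rfl (by omega)]; omega)

theorem add_le_grd3_add {ℓ r : ℕ} (ha : 1 ≤ a) (hr : r < 2 * a - 1)
    (hℓ : (2 * a - 1) * ℓ = a + b - 1 + r) (hgr : grd3 a r + 1 ≤ ℓ) {y : ℕ} (hy : y < b) :
    y + a ≤ grd3 a y + b := by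
  obtain ⟨q, s, hs, rfl⟩ := exists_eq_mul_add_of_pos (d := 2 * a - 1) (by omega) y
  have hr' : grd3 a r = if r < a then r else r - (a - 1) := by
    simpa using grd3_mul_add (a := a) 0 hr
  rw [grd3_mul_add _ hs]
  obtain h | h | h : q + 3 ≤ ℓ ∨ (ℓ = q + 2 ∨ ℓ = q + 1) ∨ ℓ ≤ q := by omega
  · have := Nat.mul_le_mul_left (2 * a - 1) h
    rw [mul_add] at this
    split_ifs at hr' ⊢ <;> omega
  · rcases h with rfl | rfl <;> rw [mul_add] at hℓ <;> split_ifs at hr' ⊢ <;> omega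
  · have := Nat.mul_le_mul_left (2 * a - 1) h
    omega

theorem add_two_mul_le_grd3_add (ha : 2 ≤ a) (hkey : ∀ y < b, y + a ≤ grd3 a y + b)
    {y : ℕ} (hy : y + a < b) : y + 2 * a ≤ grd3 a y + b + 1 := by
  have := hkey (y + a) hy
  have := grd3_add_self_le ha y
  omega

end Grd3

structure IsFamilyB (c : ℕ → ℕ) (a b : ℕ) : Prop where
  two_le : 2 ≤ a
  le_c4 : 3 * a - 1 ≤ b
  c1 : c 1 = 1
  c2 : c 2 = a
  c3 : c 3 = 2 * a - 1
  c4 : c 4 = b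
  c5 : c 5 = a + b - 1
  c6 : c 6 = 2 * b - 1

namespace IsFamilyB

variable {c : ℕ → ℕ} {a b : ℕ} (hC : IsFamilyB c a b)
include hC

theorem strictMonoOn : StrictMonoOn c (Set.Icc 1 6) := by
  have := hC.two_le; have := hC.le_c4
  intro i ⟨hi1, hi6⟩ j ⟨hj1, hj6⟩ hij
  interval_cases i <;> interval_cases j <;>
    simp only [hC.c1, hC.c2, hC.c3, hC.c4, hC.c5, hC.c6] <;> omega

theorem grd_eq_grd_sub_add_one {k m m' v : ℕ} (hk : k ∈ Set.Icc 1 5) (hm : c k = m)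
    (hm' : c (k + 1) = m') (h₁ : m ≤ v) (h₂ : v < m') : grd 6 c v = grd 6 c (v - m) + 1 := by
  obtain ⟨hk₁, hk₅⟩ := hk
  have hck := hC.strictMonoOn.monotoneOn (a := 1) (b := k) (by simp) ⟨hk₁, by omega⟩ hk₁
  rw [hC.c1] at hck
  subst hm hm'
  exact grd_eq_grd_sub_add_one_of_strictMonoOn hC.strictMonoOn ⟨hk₁, by omega⟩ hck h₁
    fun _ => h₂

theorem grd_c6_add (t : ℕ) : grd 6 c (2 * b - 1 + t) = grd 6 c t + 1 := by
  have := hC.two_le; have := hC.le_c4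
  have h := grd_eq_grd_sub_add_one_of_strictMonoOn hC.strictMonoOn (k := 6)
    (v := 2 * b - 1 + t) (by simp) (by rw [hC.c6]; omega) (by rw [hC.c6]; omega) (by omega)
  rwa [hC.c6, Nat.add_sub_cancel_left] at h

theorem grd_of_lt_c4 {v : ℕ} (hv : v < b) : grd 6 c v = grd3 a v := by
  have := hC.two_le
  induction v using Nat.strong_induction_on with
  | _ v ih =>
  rcases Nat.eq_zero_or_pos v with rfl | hv0
  · rw [grd_zero, grd3_of_lt (by omega)]
  rcases lt_or_ge v a with h₁ | h₁
  · rw [hC.grd_eq_grd_sub_add_one (k := 1) (by simp) hC.c1 hC.c2 hv0 h₁,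
      ih _ (by omega) (by omega), grd3_of_lt h₁, grd3_of_lt (by omega)]
    omega
  rcases lt_or_ge v (2 * a - 1) with h₂ | h₂
  · rw [hC.grd_eq_grd_sub_add_one (k := 2) (by simp) hC.c2 hC.c3 h₁ h₂,
      ih _ (by omega) (by omega), grd3_of_le_of_lt h₁ h₂, grd3_of_lt (by omega)]
    omega
  · rw [hC.grd_eq_grd_sub_add_one (k := 3) (by simp) hC.c3 hC.c4 h₂ hv,
      ih _ (by omega) (by omega), ← grd3_add_two_mul_sub_one (by omega), Nat.sub_add_cancel h₂]

theorem grd_of_le_c4_of_lt_c5 {v : ℕ} (h₁ : b ≤ v) (h₂ : v < a + b - 1) :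
    grd 6 c v = v - b + 1 := by
  rw [hC.grd_eq_grd_sub_add_one (k := 4) (by simp) hC.c4 hC.c5 h₁ h₂,
    hC.grd_of_lt_c4 (by have := hC.le_c4; omega), grd3_of_lt (by omega)]

theorem grd_of_le_c5_of_lt_c6 {v : ℕ} (h₁ : a + b - 1 ≤ v) (h₂ : v < 2 * b - 1) :
    grd 6 c v = grd3 a (v - (a + b - 1)) + 1 := by
  rw [hC.grd_eq_grd_sub_add_one (k := 5) (by simp) hC.c5 hC.c6 h₁ h₂,
    hC.grd_of_lt_c4 (by have := hC.le_c4; omega)]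

theorem grd_c1_add_le (t : ℕ) : grd 6 c (1 + t) ≤ grd 6 c t + 1 := by
  have := hC.two_le; have := hC.le_c4
  refine apply_add_le_of_periodic hC.grd_c6_add (fun t ht => ?_) (fun t _ ht => ?_) t
  · rcases lt_or_ge (1 + t) b with h₁ | h₁
    · rw [hC.grd_of_lt_c4 h₁, hC.grd_of_lt_c4 (by omega), add_comm]
      exact grd3_add_one_le hC.two_le t
    rcases lt_or_ge (1 + t) (a + b - 1) with h₂ | h₂
    · rw [hC.grd_of_le_c4_of_lt_c5 h₁ h₂]
      rcases lt_or_ge t b with h | h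
      · omega
      · rw [hC.grd_of_le_c4_of_lt_c5 h (by omega)]
        omega
    rw [hC.grd_of_le_c5_of_lt_c6 h₂ ht]
    rcases lt_or_ge t (a + b - 1) with h | h
    · rw [show 1 + t - (a + b - 1) = 0 by omega, grd3_of_lt (by omega)]
      omega
    · rw [hC.grd_of_le_c5_of_lt_c6 h (by omega),
        show 1 + t - (a + b - 1) = t - (a + b - 1) + 1 by omega]
      exact Nat.add_le_add_right (grd3_add_one_le hC.two_le _) 1
  · rw [show 1 + t - (2 * b - 1) = 0 by omega, grd_zero]
    omega

theorem grd_c2_add_le (hkey : ∀ y < b, y + a ≤ grd3 a y + b) (t : ℕ) :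
    grd 6 c (a + t) ≤ grd 6 c t + 1 := by
  have := hC.two_le; have := hC.le_c4
  refine apply_add_le_of_periodic hC.grd_c6_add (fun t ht => ?_) (fun t ht ht' => ?_) t
  · rcases lt_or_ge (a + t) b with h₁ | h₁
    · rw [hC.grd_of_lt_c4 h₁, hC.grd_of_lt_c4 (by omega), add_comm]
      exact grd3_add_self_le hC.two_le t
    rcases lt_or_ge (a + t) (a + b - 1) with h₂ | h₂
    · rw [hC.grd_of_le_c4_of_lt_c5 h₁ h₂, hC.grd_of_lt_c4 (by omega)]
      have := hkey t (by omega)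
      omega
    rw [hC.grd_of_le_c5_of_lt_c6 h₂ ht]
    rcases lt_or_ge t b with h₃ | h₃
    · rw [show a + t - (a + b - 1) = 0 by omega, grd3_of_lt (by omega)]
      omega
    rcases lt_or_ge t (a + b - 1) with h₄ | h₄
    · rw [hC.grd_of_le_c4_of_lt_c5 h₃ h₄, grd3_of_lt (by omega)]
      omega
    · rw [hC.grd_of_le_c5_of_lt_c6 h₄ (by omega),
        show a + t - (a + b - 1) = t - (a + b - 1) + a by omega]
      exact Nat.add_le_add_right (grd3_add_self_le hC.two_le _) 1
  · rw [hC.grd_of_lt_c4 (by omega), grd3_of_lt (by omega),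
      hC.grd_of_le_c5_of_lt_c6 (by omega) ht]
    have := add_two_mul_le_grd3_add hC.two_le hkey (y := t - (a + b - 1)) (by omega)
    omega

theorem grd_c3_add_le (hkey : ∀ y < b, y + a ≤ grd3 a y + b) (t : ℕ) :
    grd 6 c (2 * a - 1 + t) ≤ grd 6 c t + 1 := by
  have := hC.two_le; have := hC.le_c4
  refine apply_add_le_of_periodic hC.grd_c6_add (fun t ht => ?_) (fun t ht ht' => ?_) t
  · rcases lt_or_ge (2 * a - 1 + t) b with h₁ | h₁
    · rw [hC.grd_of_lt_c4 h₁, hC.grd_of_lt_c4 (by omega), add_comm,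
        grd3_add_two_mul_sub_one (by omega)]
    rcases lt_or_ge (2 * a - 1 + t) (a + b - 1) with h₂ | h₂
    · rw [hC.grd_of_le_c4_of_lt_c5 h₁ h₂, hC.grd_of_lt_c4 (by omega)]
      have := add_two_mul_le_grd3_add hC.two_le hkey (y := t) (by omega)
      omega
    rw [hC.grd_of_le_c5_of_lt_c6 h₂ ht]
    rcases lt_or_ge t b with h₃ | h₃
    · rw [hC.grd_of_lt_c4 h₃, grd3_of_lt (by omega)]
      have := hkey t h₃
      omega
    rcases lt_or_ge t (a + b - 1) with h₄ | h₄
    · rw [hC.grd_of_le_c4_of_lt_c5 h₃ h₄, grd3_of_le_of_lt (by omega) (by omega)]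
      omega
    · rw [hC.grd_of_le_c5_of_lt_c6 h₄ (by omega),
        show 2 * a - 1 + t - (a + b - 1) = t - (a + b - 1) + (2 * a - 1) by omega,
        grd3_add_two_mul_sub_one (by omega)]
  · -- `3a - 1 ≤ b` puts `t ≥ 2b - 2a` in the last greedy zone `[a + b - 1, 2b - 1)`
    rw [hC.grd_of_lt_c4 (by omega), hC.grd_of_le_c5_of_lt_c6 (by omega) ht]
    rcases lt_or_ge (2 * a - 1 + t - (2 * b - 1)) a with h | h
    · have := hkey (t - (a + b - 1) + (2 * a - 1)) (by omega)
      rw [grd3_add_two_mul_sub_one (by omega)] at this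
      rw [grd3_of_lt h]
      omega
    · have := add_two_mul_le_grd3_add hC.two_le hkey (y := t - (a + b - 1)) (by omega)
      rw [grd3_of_le_of_lt h (by omega)]
      omega

theorem grd_c4_add_le (t : ℕ) : grd 6 c (b + t) ≤ grd 6 c t + 1 := by
  have := hC.two_le; have := hC.le_c4
  refine apply_add_le_of_periodic hC.grd_c6_add (fun t ht => ?_) (fun t ht ht' => ?_) t
  · rw [hC.grd_of_lt_c4 (v := t) (by omega)]
    rcases lt_or_ge (b + t) (a + b - 1) with h | h
    · rw [hC.grd_of_le_c4_of_lt_c5 (by omega) h, grd3_of_lt (by omega)]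
      omega
    · rw [hC.grd_of_le_c5_of_lt_c6 h ht, show b + t - (a + b - 1) = t - (a - 1) by omega]
      exact Nat.add_le_add_right (grd3_sub_le (by omega) t) 1
  · rcases lt_or_ge t b with h₁ | h₁
    · rw [show b + t - (2 * b - 1) = 0 by omega, grd_zero]
      omega
    rw [hC.grd_of_lt_c4 (by omega)]
    rcases lt_or_ge t (a + b - 1) with h₂ | h₂
    · rw [hC.grd_of_le_c4_of_lt_c5 h₁ h₂, grd3_of_lt (by omega)]
      omega
    · rw [hC.grd_of_le_c5_of_lt_c6 h₂ ht,
        show t - (a + b - 1) = b + t - (2 * b - 1) - a by omega]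
      have := grd3_add_self_le hC.two_le (b + t - (2 * b - 1) - a)
      rwa [Nat.sub_add_cancel (by omega)] at this

theorem grd_c5_add_le (hkey : ∀ y < b, y + a ≤ grd3 a y + b) (t : ℕ) :
    grd 6 c (a + b - 1 + t) ≤ grd 6 c t + 1 := by
  have := hC.two_le; have := hC.le_c4
  refine apply_add_le_of_periodic hC.grd_c6_add (fun t ht => ?_) (fun t ht ht' => ?_) t
  · rw [hC.grd_of_le_c5_of_lt_c6 (by omega) ht, Nat.add_sub_cancel_left,
      hC.grd_of_lt_c4 (by omega)]
  · rcases lt_or_ge (a + b - 1 + t - (2 * b - 1)) b with h₁ | h₁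
    · rw [hC.grd_of_lt_c4 h₁]
      rcases lt_or_ge t b with h₂ | h₂
      · rw [hC.grd_of_lt_c4 h₂, grd3_of_lt (by omega)]
        have := hkey t h₂
        omega
      rcases lt_or_ge t (a + b - 1) with h₃ | h₃
      · rw [hC.grd_of_le_c4_of_lt_c5 h₂ h₃, grd3_of_le_of_lt (by omega) (by omega)]
        omega
      · rw [hC.grd_of_le_c5_of_lt_c6 h₃ ht,
          show t - (a + b - 1) = a + b - 1 + t - (2 * b - 1) - (2 * a - 1) by omega,
          ← grd3_add_two_mul_sub_one (by omega), Nat.sub_add_cancel (by omega)]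
    · rw [hC.grd_of_le_c4_of_lt_c5 h₁ (by omega), hC.grd_of_le_c5_of_lt_c6 (by omega) ht]
      have := add_two_mul_le_grd3_add hC.two_le hkey (y := t - (a + b - 1)) (by omega)
      omega

theorem canonical (hkey : ∀ y < b, y + a ≤ grd3 a y + b) : Canonical 6 c := by
  refine canonical_of_grd_add_le (by norm_num) hC.c1 fun i hi t => ?_
  obtain ⟨hi₁, hi₆⟩ := mem_Icc.mp hi
  interval_cases i
  · rw [hC.c1]; exact hC.grd_c1_add_le t
  · rw [hC.c2]; exact hC.grd_c2_add_le hkey t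
  · rw [hC.c3]; exact hC.grd_c3_add_le hkey t
  · rw [hC.c4]; exact hC.grd_c4_add_le t
  · rw [hC.c5]; exact hC.grd_c5_add_le hkey t
  · rw [hC.c6, hC.grd_c6_add]

theorem add_le_grd3_add_of_grd_le {ℓ : ℕ} (h₁ : a + b - 1 ≤ (2 * a - 1) * ℓ)
    (h₂ : (2 * a - 1) * ℓ < a + b - 1 + (2 * a - 1)) (hgl : grd 6 c ((2 * a - 1) * ℓ) ≤ ℓ) :
    ∀ y < b, y + a ≤ grd3 a y + b := by
  have := hC.two_le; have := hC.le_c4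
  rw [hC.grd_of_le_c5_of_lt_c6 h₁ (by omega)] at hgl
  exact fun y hy => add_le_grd3_add (by omega) (by omega) (by omega) hgl hy

theorem lt_grd_five : 2 < grd 5 c (2 * b) := by
  have := hC.two_le; have := hC.le_c4
  have hc := hC.strictMonoOn.mono (Set.Icc_subset_Icc_right (by norm_num : 5 ≤ 6))
  rw [grd_eq_grd_sub_add_one_of_strictMonoOn hc (k := 5) (by simp) (by rw [hC.c5]; omega)
      (by rw [hC.c5]; omega) (by omega),
    grd_eq_grd_sub_add_one_of_strictMonoOn hc (k := 3) (by simp) (by rw [hC.c3]; omega)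
      (by rw [hC.c3, hC.c5]; omega)
      (fun _ => by rw [show 3 + 1 = 4 from rfl, hC.c4, hC.c5]; omega)]
  obtain ⟨_, -, -, -, h⟩ := exists_grd_eq_grd_sub_add_one (n := 5) (by norm_num) hC.c1
    (v := 2 * b - c 5 - c 3) (by rw [hC.c3, hC.c5]; omega)
  omega

theorem not_canonical_five : ¬ Canonical 5 c := by
  have := hC.two_le; have := hC.le_c4
  refine not_canonical_of_isRepr (v := 2 * b) (x := Pi.single 4 2) (by omega) ?_
    (by simpa using hC.lt_grd_five)
  simp [IsRepr, Pi.single_apply, hC.c4, mul_comm]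

end IsFamilyB

theorem family_b_canonical_general (c : ℕ → ℕ) (c2 c4 : ℕ) (h2 : 1 < c2)
    (h4 : 3 * c2 - 1 ≤ c4)
    (hc1 : c 1 = 1) (hc2 : c 2 = c2) (hc3 : c 3 = 2 * c2 - 1) (hc4 : c 4 = c4)
    (hc5 : c 5 = c2 + c4 - 1) (hc6 : c 6 = 2 * c4 - 1)
    (ℓ : ℕ) (hℓ : ℓ = (c 5 + c 3 - 1) / c 3)
    (hgl : grd 6 c (ℓ * c 3) ≤ ℓ) :
    Canonical 6 c ∧ ¬ Canonical 5 c := by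
  have hC : IsFamilyB c c2 c4 := ⟨h2, h4, hc1, hc2, hc3, hc4, hc5, hc6⟩
  rw [hc3, hc5] at hℓ
  rw [hc3, mul_comm] at hgl
  have hdiv := Nat.div_add_mod (c2 + c4 - 1 + (2 * c2 - 1) - 1) (2 * c2 - 1)
  have hmod := Nat.mod_lt (c2 + c4 - 1 + (2 * c2 - 1) - 1) (show 0 < 2 * c2 - 1 by omega)
  rw [← hℓ] at hdiv
  exact ⟨hC.canonical (hC.add_le_grd3_add_of_grd_le (by omega) (by omega) hgl),
    hC.not_canonical_five⟩

theorem family_b_canonical (c : ℕ → ℕ) (c2 c4 : ℕ) (h2 : 1 < c2)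
    (h4 : 3 * c2 - 1 ≤ c4)
    (hc1 : c 1 = 1) (hc2 : c 2 = c2) (hc3 : c 3 = 2 * c2 - 1) (hc4 : c 4 = c4)
    (hc5 : c 5 = c2 + c4 - 1) (hc6 : c 6 = 2 * c4 - 1)
    (ℓ : ℕ) (hℓ : ℓ = (c 5 + c 3 - 1) / c 3)
    (hg : grd 6 c (ℓ * c 3) =
      ℓ * c 3 - c 5 + 1 - ((ℓ * c 3 - c 5) / c 2) * (c 2 - 1))
    (hgl : grd 6 c (ℓ * c 3) ≤ ℓ) :
    Canonical 6 c ∧ ¬ Canonical 5 c :=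
  family_b_canonical_general c c2 c4 h2 h4 hc1 hc2 hc3 hc4 hc5 hc6 ℓ hℓ hgl
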